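/- arXiv:1506.02477 — 7 statements merged into one kernel-verified Lean document; each statement's English description precedes it below -/
import Mathlib

section
/- Let p : E → B be a surjective map, f : E → E and g : B → B maps with p ∘ f = g ∘ p, and suppose each fiber p⁻¹(b) is finite and nonempty. Then p⁻¹(ePer(g)) = ePer(f), where ePer denotes the set of eventually periodic points. -/
theorem stmt_3 {E B : Type*} (p : E → B) (f : E → E) (g : B → B)
    (hp : Function.Surjective p) (hfib : ∀ b : B, (p ⁻¹' {b}).Finite)
    (hlift : p ∘ f = g ∘ p) :
    p ⁻¹' {b : B | ∃ n k : ℕ, 0 < n ∧ 0 < k ∧ g^[n + k] b = g^[n] b} =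
      {e : E | ∃ n k : ℕ, 0 < n ∧ 0 < k ∧ f^[n + k] e = f^[n] e} := by
  have comm : ∀ (j : ℕ) (x : E), p (f^[j] x) = g^[j] (p x) := by
    intro j
    induction j with
    | zero => intro x; simp
    | succ j ih =>
      intro x
      rw [Function.iterate_succ_apply', Function.iterate_succ_apply',
        show p (f (f^[j] x)) = g (p (f^[j] x)) from congrFun hlift _, ih]
  ext e
  simp only [Set.mem_preimage, Set.mem_setOf_eq]
  constructor
  · rintro ⟨n, k, hn, hk, hper⟩
    -- all f^[n + m*k] e lie in the finite fiber over g^[n] (p e)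
    have hmem : ∀ m : ℕ, p (f^[n + m * k] e) = g^[n] (p e) := by
      intro m
      rw [comm]
      induction m with
      | zero => simp
      | succ m ih =>
        have : n + (m + 1) * k = m * k + (n + k) := by ring
        rw [this, Function.iterate_add_apply, hper, ← Function.iterate_add_apply]
        rw [show m * k + n = n + m * k by ring, ih]
    have hfin : Finite ↥(p ⁻¹' {g^[n] (p e)}) := (hfib _).to_subtype
    obtain ⟨m, m', hne, heq⟩ := Finite.exists_ne_map_eq_of_infinite
      (fun m : ℕ => (⟨f^[n + m * k] e, hmem m⟩ : ↥(p ⁻¹' {g^[n] (p e)})))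
    wlog hlt : m < m' generalizing m m'
    · exact this m' m hne.symm heq.symm (by omega)
    have heq' : f^[n + m * k] e = f^[n + m' * k] e := congrArg Subtype.val heq
    refine ⟨n + m * k, (m' - m) * k, by omega, ?_, ?_⟩
    · have : 0 < m' - m := by omega
      positivity
    · have : n + m * k + (m' - m) * k = n + m' * k := by
        have := Nat.sub_add_cancel hlt.le
        nlinarith [Nat.sub_add_cancel hlt.le]
      rw [this, ← heq']
  · rintro ⟨n, k, hn, hk, hper⟩
    exact ⟨n, k, hn, hk, by rw [← comm, ← comm, hper]⟩
end

section
/- Let p : E → B be a surjective map with finite nonempty fibers, f : E → E and g : B → B maps with p ∘ f = g ∘ p. Then p(Per(f)) = Per(g), where Per denotes the set of periodic points. -/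
theorem stmt_4 {E B : Type*} (p : E → B) (f : E → E) (g : B → B)
    (hp : Function.Surjective p) (hfib : ∀ b : B, (p ⁻¹' {b}).Finite)
    (hlift : p ∘ f = g ∘ p) :
    p '' {e : E | ∃ k : ℕ, 0 < k ∧ f^[k] e = e} =
      {b : B | ∃ k : ℕ, 0 < k ∧ g^[k] b = b} := by
  have hsc : Function.Semiconj p f g := fun x => congrFun hlift x
  have hit : ∀ k : ℕ, ∀ x : E, p (f^[k] x) = g^[k] (p x) :=
    fun k x => (hsc.iterate_right k) x
  ext b
  constructor
  · rintro ⟨e, ⟨k, hk, hke⟩, rfl⟩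
    exact ⟨k, hk, by rw [← hit, hke]⟩
  · rintro ⟨k, hk, hkb⟩
    obtain ⟨x, hx⟩ := hp b
    have hfiber : ∀ n : ℕ, p (f^[k * n] x) = b := by
      intro n
      rw [hit, hx, Function.iterate_mul]
      induction n with
      | zero => rfl
      | succ n ih => rw [Function.iterate_succ_apply', ih, hkb]
    have := Set.Infinite.exists_ne_map_eq_of_mapsTo (s := (Set.univ : Set ℕ))
      (f := fun n => f^[k * n] x) Set.infinite_univ
      (fun n _ => by simp [Set.mem_preimage, hfiber n]) (hfib b)
    obtain ⟨m, -, n, -, hmn, heq⟩ := this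
    wlog hlt : m < n generalizing m n
    · exact this n m hmn.symm heq.symm (by omega)
    refine ⟨f^[k * m] x, ⟨k * (n - m), ?_, ?_⟩, hfiber m⟩
    · have : 0 < n - m := by omega
      positivity
    · rw [← Function.iterate_add_apply]
      rw [show k * (n - m) + k * m = k * n by rw [← Nat.mul_add, Nat.sub_add_cancel hlt.le]]
      exact heq.symm
end

section
/- Let G be a group and H ≤ G a subnormal subgroup of finite index. If a prime p divides the index [G : H], then there exists g ∈ G with ord_H(g) = p, where ord_H(g) = min{ n > 0 : gⁿ ∈ H }. -/
open Subgroup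

/-- If the set of positive powers landing in `K` has infimum a prime `p`, then we can
produce an element whose "order mod `H`" is exactly `p`, for any `H ≤ K` of finite index. -/
private lemma stepdown {G : Type*} [Group G] (H K : Subgroup G) (hHK : H ≤ K)
    (hfin : H.index ≠ 0) (p : ℕ) (hp : p.Prime) (g : G)
    (hg : sInf {n : ℕ | 0 < n ∧ g ^ n ∈ K} = p) :
    ∃ g' : G, sInf {n : ℕ | 0 < n ∧ g' ^ n ∈ H} = p := by
  obtain ⟨N, hNpos, -, hNmem⟩ := Subgroup.exists_pow_mem_of_index_ne_zero hfin g
  have hSne : {n : ℕ | 0 < n ∧ g ^ n ∈ H}.Nonempty := ⟨N, hNpos, hNmem⟩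
  set n := sInf {n : ℕ | 0 < n ∧ g ^ n ∈ H} with hn
  have hnmem : n ∈ {n : ℕ | 0 < n ∧ g ^ n ∈ H} := Nat.sInf_mem hSne
  have hKne : {n : ℕ | 0 < n ∧ g ^ n ∈ K}.Nonempty := by
    by_contra h
    rw [Set.not_nonempty_iff_eq_empty] at h
    rw [h, Nat.sInf_empty] at hg
    exact hp.ne_zero hg.symm
  have hpK : g ^ p ∈ K := by
    have := Nat.sInf_mem hKne
    rw [hg] at this
    exact this.2
  -- p divides n
  have hpn : p ∣ n := by
    have hnK : g ^ n ∈ K := hHK hnmem.2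
    by_contra hnd
    have hrpos : 0 < n % p := Nat.pos_of_ne_zero fun h => hnd (Nat.dvd_of_mod_eq_zero h)
    have h2 : g ^ n = g ^ (p * (n / p)) * g ^ (n % p) := by
      rw [← pow_add]; congr 1; exact (Nat.div_add_mod n p).symm
    have h3 : g ^ (p * (n / p)) ∈ K := by rw [pow_mul]; exact pow_mem hpK _
    have hnK' : g ^ (p * (n / p)) * g ^ (n % p) ∈ K := h2 ▸ hnK
    have hr : g ^ (n % p) ∈ K := by
      have := K.mul_mem (K.inv_mem h3) hnK'
      rwa [inv_mul_cancel_left] at this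
    have hle := Nat.sInf_le (show n % p ∈ {n : ℕ | 0 < n ∧ g ^ n ∈ K} from ⟨hrpos, hr⟩)
    rw [hg] at hle
    exact absurd hle (Nat.not_le.2 (Nat.mod_lt _ hp.pos))
  obtain ⟨q, hq⟩ := hpn
  have hnpos : 0 < n := hnmem.1
  have hqpos : 0 < q := by
    rcases Nat.eq_zero_or_pos q with h | h
    · exfalso; rw [h, Nat.mul_zero] at hq; omega
    · exact h
  refine ⟨g ^ q, le_antisymm (Nat.sInf_le ⟨hp.pos, ?_⟩) (le_csInf ⟨p, hp.pos, ?_⟩ ?_)⟩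
  · rw [← pow_mul, mul_comm, ← hq]; exact hnmem.2
  · rw [← pow_mul, mul_comm, ← hq]; exact hnmem.2
  · rintro m ⟨hmpos, hmmem⟩
    rw [← pow_mul] at hmmem
    have : n ≤ q * m := Nat.sInf_le ⟨Nat.mul_pos hqpos hmpos, hmmem⟩
    rw [hq] at this
    exact Nat.le_of_mul_le_mul_left (by linarith [Nat.mul_comm q m]) hqpos

private lemma auxmain {G : Type*} [Group G] (p : ℕ) (hp : p.Prime) :
    ∀ m : ℕ, ∀ H : Subgroup G, H.index ≠ 0 →
    (∃ c : ℕ → Subgroup G, c 0 = H ∧ c m = ⊤ ∧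
      ∀ i < m, c i ≤ c (i + 1) ∧ ∀ x ∈ c (i + 1), ∀ h ∈ c i, x * h * x⁻¹ ∈ c i) →
    p ∣ H.index → ∃ g : G, sInf {n : ℕ | 0 < n ∧ g ^ n ∈ H} = p := by
  intro m
  induction m with
  | zero =>
    rintro H hfin ⟨c, hc0, hcm, -⟩ hdvd
    rw [← hc0, hcm, Subgroup.index_top] at hdvd
    exact absurd (Nat.le_of_dvd one_pos hdvd) (Nat.not_le.2 hp.one_lt)
  | succ m ih =>
    rintro H hfin ⟨c, hc0, hcm, hstep⟩ hdvd
    set K := c 1 with hK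
    have hHK : H ≤ K := hc0 ▸ (hstep 0 (Nat.succ_pos m)).1
    have hrel : H.relIndex K * K.index = H.index := Subgroup.relIndex_mul_index hHK
    have hKfin : K.index ≠ 0 := fun h => hfin (by rw [← hrel, h, Nat.mul_zero])
    have hrelne : H.relIndex K ≠ 0 := fun h => hfin (by rw [← hrel, h, Nat.zero_mul])
    rcases (Nat.Prime.dvd_mul hp).1 (hrel ▸ hdvd) with hcase | hcase
    · -- p divides [K : H], with H normal in K: use Cauchy in K ⧸ H
      have hnorm : (H.subgroupOf K).Normal := by
        constructor
        intro h hh k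
        have := (hstep 0 (Nat.succ_pos m)).2 k k.2 h (hc0 ▸ hh)
        rwa [hc0] at this
      have hfinQ : Finite (K ⧸ H.subgroupOf K) := by
        refine Nat.finite_of_card_ne_zero ?_
        rwa [← Subgroup.index_eq_card]
      have : Fact p.Prime := ⟨hp⟩
      obtain ⟨x, hx⟩ := exists_prime_orderOf_dvd_card' (G := K ⧸ H.subgroupOf K) p
        (by rwa [← Subgroup.index_eq_card])
      obtain ⟨g, rfl⟩ := QuotientGroup.mk_surjective x
      refine ⟨(g : G), ?_⟩
      have key : ∀ nn : ℕ, (g : G) ^ nn ∈ H ↔ p ∣ nn := by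
        intro nn
        rw [← hx, orderOf_dvd_iff_pow_eq_one, ← QuotientGroup.mk_pow,
          QuotientGroup.eq_one_iff]
        exact Iff.symm (Subgroup.mem_subgroupOf (H := H) (K := K) (h := g ^ nn))
      refine le_antisymm (Nat.sInf_le ⟨hp.pos, (key p).2 dvd_rfl⟩)
        (le_csInf ⟨p, hp.pos, (key p).2 dvd_rfl⟩ ?_)
      rintro b ⟨hbpos, hbmem⟩
      exact Nat.le_of_dvd hbpos ((key b).1 hbmem)
    · -- p divides [G : K]: use induction on K then step down
      obtain ⟨g, hg⟩ := ih K hKfin ⟨fun i => c (i + 1), rfl, hcm, fun i hi => hstep (i + 1)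
        (Nat.succ_lt_succ hi)⟩ hcase
      exact stepdown H K hHK hfin p hp g hg

theorem stmt_10 {G : Type*} [Group G] (H : Subgroup G) [H.FiniteIndex]
    (hsub : ∃ m : ℕ, ∃ c : ℕ → Subgroup G, c 0 = H ∧ c m = ⊤ ∧
      ∀ i < m, c i ≤ c (i + 1) ∧ ∀ x ∈ c (i + 1), ∀ h ∈ c i, x * h * x⁻¹ ∈ c i)
    (p : ℕ) (hp : p.Prime) (hdvd : p ∣ H.index) :
    ∃ g : G, sInf {n : ℕ | 0 < n ∧ g ^ n ∈ H} = p := by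
  obtain ⟨m, hc⟩ := hsub
  exact auxmain p hp m H Subgroup.FiniteIndex.index_ne_zero hc hdvd
end

section
/- Let G be a nilpotent group and H ≤ G a subgroup of finite index. If a prime p divides [G : H], then there exists g ∈ G with min{ n > 0 : gⁿ ∈ H } = p. -/
/-!
The minimum in question is the period of `g` acting on the coset `H` in `G ⧸ H`. A nilpotent
group satisfies the normalizer condition, so climbing through normalizers shows that a
finite-index subgroup is subnormal. Along a subnormal series `H = H₀ ◁ H₁ ◁ ⋯ ◁ Hₖ = G` the
index is the product of the `[Hᵢ₊₁ : Hᵢ]`, so `p` divides one of them, and Cauchy's theorem in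
the finite group `Hᵢ₊₁ / Hᵢ` gives some `g` whose period modulo `Hᵢ`, hence also modulo the
smaller `H`, is divisible by `p`. A suitable power of `g` then has period exactly `p`.
-/

open MulAction Subgroup

namespace MulAction

variable {M α : Type*} [Monoid M] [MulAction M α]

theorem period_pow (m : M) (a : α) {k : ℕ} (hk : k ≠ 0) :
    period (m ^ k) a = period m a / (period m a).gcd k := by
  simp only [period_eq_minimalPeriod, ← smul_iterate]
  exact Function.minimalPeriod_iterate_eq_div_gcd hk

theorem period_pow_div_of_dvd {m : M} {a : α} {d : ℕ} (hpos : 0 < period m a)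
    (hd : d ∣ period m a) : period (m ^ (period m a / d)) a = d := by
  have hk : period m a / d ≠ 0 :=
    (Nat.div_pos (Nat.le_of_dvd hpos hd) (Nat.pos_of_dvd_of_pos hd hpos)).ne'
  rw [period_pow m a hk, Nat.gcd_eq_right (Nat.div_dvd_of_dvd hd), Nat.div_div_self hd hpos.ne']

end MulAction

namespace Subgroup

variable {G : Type*} [Group G]

theorem smul_coe_one_eq_iff (H : Subgroup G) (g : G) :
    g • ((1 : G) : G ⧸ H) = (1 : G) ↔ g ∈ H := by
  rw [← mem_stabilizer_iff, stabilizer_quotient]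

theorem pow_mem_iff_period_dvd (H : Subgroup G) (g : G) (n : ℕ) :
    g ^ n ∈ H ↔ period g ((1 : G) : G ⧸ H) ∣ n := by
  rw [← pow_smul_eq_iff_period_dvd, smul_coe_one_eq_iff]

theorem sInf_pos_pow_mem_eq_period (H : Subgroup G) (g : G) :
    sInf {n : ℕ | 0 < n ∧ g ^ n ∈ H} = period g ((1 : G) : G ⧸ H) := by
  simp only [period_eq_minimalPeriod, Function.minimalPeriod_eq_sInf_n_pos_IsPeriodicPt,
    isPeriodicPt_smul_iff, smul_coe_one_eq_iff]

theorem period_pos_of_finiteIndex (H : Subgroup G) [H.FiniteIndex] (g : G) :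
    0 < period g ((1 : G) : G ⧸ H) := by
  obtain ⟨n, hn, -, hmem⟩ :=
    exists_pow_mem_of_index_ne_zero (FiniteIndex.index_ne_zero (H := H)) g
  exact Nat.pos_of_dvd_of_pos ((pow_mem_iff_period_dvd H g n).1 hmem) hn

theorem period_dvd_of_le {H K : Subgroup G} (hHK : H ≤ K) (g : G) :
    period g ((1 : G) : G ⧸ K) ∣ period g ((1 : G) : G ⧸ H) :=
  (pow_mem_iff_period_dvd K g _).1 (hHK ((pow_mem_iff_period_dvd H g _).2 dvd_rfl))

theorem exists_prime_dvd_period_of_dvd_relIndex {H K : Subgroup G} [(H.subgroupOf K).Normal]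
    [H.IsFiniteRelIndex K] {p : ℕ} (hp : p.Prime) (hdvd : p ∣ H.relIndex K) :
    ∃ g ∈ K, p ∣ period g ((1 : G) : G ⧸ H) := by
  have : Fact p.Prime := ⟨hp⟩
  have : Finite (K ⧸ H.subgroupOf K) := finite_quotient_of_finiteIndex
  obtain ⟨q, hq⟩ := exists_prime_orderOf_dvd_card' (G := K ⧸ H.subgroupOf K) p hdvd
  obtain ⟨g, rfl⟩ := QuotientGroup.mk_surjective q
  refine ⟨g, g.2, hq ▸ orderOf_dvd_of_pow_eq_one ?_⟩
  rw [← QuotientGroup.mk_pow, QuotientGroup.eq_one_iff, mem_subgroupOf, coe_pow,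
    pow_mem_iff_period_dvd]

theorem IsSubnormal.exists_prime_dvd_period {H : Subgroup G} (hH : H.IsSubnormal)
    [hfin : H.FiniteIndex] {p : ℕ} (hp : p.Prime) (hdvd : p ∣ H.index) :
    ∃ g : G, p ∣ period g ((1 : G) : G ⧸ H) := by
  induction hH generalizing hfin with
  | top => exact absurd (by rwa [index_top] at hdvd) hp.not_dvd_one
  | step H K hHK _ _ ih =>
    rw [← relIndex_mul_index hHK] at hdvd
    rcases hp.dvd_mul.1 hdvd with hrel | hK
    · have : H.IsFiniteRelIndex K := isFiniteRelIndex_of_finiteIndex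
      obtain ⟨g, -, hg⟩ := exists_prime_dvd_period_of_dvd_relIndex hp hrel
      exact ⟨g, hg⟩
    · have := finiteIndex_of_le hHK
      obtain ⟨g, hg⟩ := ih hK
      exact ⟨g, hg.trans (period_dvd_of_le hHK g)⟩

end Subgroup

theorem NormalizerCondition.isSubnormal_of_finiteIndex {G : Type*} [Group G]
    (hG : NormalizerCondition G) (H : Subgroup G) [H.FiniteIndex] : H.IsSubnormal := by
  induction hn : H.index using Nat.strong_induction_on generalizing H with
  | _ n ih =>
    obtain rfl | hne := eq_or_ne H ⊤
    · exact .top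
    have hlt : H < normalizer (H : Set G) := hG H hne.lt_top
    have := finiteIndex_of_le hlt.le
    exact .step H _ hlt.le (ih _ (hn ▸ index_strictAnti hlt) _ rfl) normal_in_normalizer

theorem stmt_11 {G : Type*} [Group G] [Group.IsNilpotent G] (H : Subgroup G)
    [H.FiniteIndex] (p : ℕ) (hp : p.Prime) (hdvd : p ∣ H.index) :
    ∃ g : G, sInf {n : ℕ | 0 < n ∧ g ^ n ∈ H} = p := by
  have hH : H.IsSubnormal :=
    Group.normalizerCondition_of_isNilpotent.isSubnormal_of_finiteIndex H
  obtain ⟨g, hg⟩ := hH.exists_prime_dvd_period hp hdvd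
  refine ⟨g ^ (period g ((1 : G) : G ⧸ H) / p), ?_⟩
  rw [sInf_pos_pow_mem_eq_period, period_pow_div_of_dvd (period_pos_of_finiteIndex H g) hg]
end

section
/- Let G be a finitely generated nilpotent group, H ≤ G a subgroup of finite index, and s a positive integer. Let H^(1/s) denote the subgroup of G generated by { g ∈ G : ord_H(g) divides s }, where ord_H(g) = min{ n > 0 : gⁿ ∈ H }. Then the index [H^(1/s) : H] divides s^k for some k ∈ ℕ; equivalently, every prime dividing [H^(1/s) : H] divides s. -/
/-!
Let `N` be the normal core of `H` and `Γ = G ⧸ N`, a finite nilpotent group. Its Sylow subgroups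
are normal, so the join `T` of those belonging to the primes dividing `s` is a normal subgroup whose
order is a product of such primes and whose index is prime to `s`. Writing `1 = u [Γ : T] + v s`
shows that every `x` with `x ^ s ∈ H / N` lies in `(H / N) ⊔ T`. Hence `H^(1/s)` lies in the
preimage of `(H / N) ⊔ T`, whose index over `H` divides `|T|`.
-/

open Subgroup

namespace Subgroup

variable {G : Type*} [Group G]

theorem card_mul_relIndex {H K : Subgroup G} (h : H ≤ K) :
    Nat.card H * H.relIndex K = Nat.card K := by
  simpa only [relIndex_bot_left] using relIndex_mul_relIndex ⊥ H K bot_le h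

theorem relIndex_dvd_relIndex_of_le {H K L : Subgroup G} (hHK : H ≤ K) (hKL : K ≤ L) :
    H.relIndex K ∣ H.relIndex L :=
  Dvd.intro _ (relIndex_mul_relIndex H K L hHK hKL)

theorem card_sup_dvd_of_normal (H K : Subgroup G) [K.Normal] :
    Nat.card (K ⊔ H : Subgroup G) ∣ Nat.card K * Nat.card H := by
  rw [← card_mul_relIndex (le_sup_left : K ≤ K ⊔ H), relIndex_sup_left]
  exact mul_dvd_mul_left _ (relIndex_dvd_card K H)

theorem card_biSup_dvd_prod {ι : Type*} (F : Finset ι) (P : ι → Subgroup G)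
    (hP : ∀ i ∈ F, (P i).Normal) :
    Nat.card (⨆ i ∈ F, P i : Subgroup G) ∣ ∏ i ∈ F, Nat.card (P i) := by
  classical
  induction F using Finset.induction_on with
  | empty => simp
  | insert a F ha ih =>
    have := hP a (F.mem_insert_self a)
    rw [Finset.iSup_insert, Finset.prod_insert ha]
    exact (card_sup_dvd_of_normal _ (P a)).trans
      (mul_dvd_mul_left _ (ih fun i hi => hP i (Finset.mem_insert_of_mem hi)))

theorem relIndex_sup_dvd_card (H K : Subgroup G) [K.Normal] [Finite H] :
    H.relIndex (H ⊔ K) ∣ Nat.card K := by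
  have hcard : Nat.card H * H.relIndex (H ⊔ K) = Nat.card K * K.relIndex H := by
    rw [card_mul_relIndex le_sup_left, sup_comm, ← card_mul_relIndex le_sup_left,
      relIndex_sup_left]
  refine (Nat.mul_dvd_mul_iff_left (Nat.card_pos (α := H))).mp ?_
  rw [hcard, mul_comm (Nat.card H)]
  exact mul_dvd_mul_left _ (relIndex_dvd_card K H)

theorem mem_sup_of_pow_mem {H T : Subgroup G} [T.Normal] {s : ℕ} (hT : T.index.Coprime s)
    {x : G} (hx : x ^ s ∈ H) : x ∈ H ⊔ T := by
  obtain ⟨u, v, huv⟩ := hT.isCoprime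
  have hx_eq : x = (x ^ s) ^ v * (x ^ T.index) ^ u := by
    calc x = x ^ ((s : ℤ) * v + (T.index : ℤ) * u) := by
          rw [mul_comm (s : ℤ), mul_comm (T.index : ℤ), add_comm, huv, zpow_one]
      _ = _ := by rw [zpow_add, zpow_mul, zpow_mul, zpow_natCast, zpow_natCast]
  rw [hx_eq]
  exact mul_mem (mem_sup_left (zpow_mem hx v)) (mem_sup_right (zpow_mem (T.pow_index_mem x) u))

end Subgroup

section SylowSup

variable (Γ : Type*) [Group Γ] (s : ℕ)

-- In a finite nilpotent group, the Hall subgroup for the primes dividing `s`.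
noncomputable def sylowSup : Subgroup Γ :=
  ⨆ p ∈ s.primeFactors, ((default : Sylow p Γ) : Subgroup Γ)

variable {Γ s} [Finite Γ]

theorem normal_sylow_of_mem_primeFactors [Group.IsNilpotent Γ] {p : ℕ}
    (hp : p ∈ s.primeFactors) : ((default : Sylow p Γ) : Subgroup Γ).Normal :=
  have : Fact p.Prime := ⟨Nat.prime_of_mem_primeFactors hp⟩
  inferInstance

instance normal_sylowSup [Group.IsNilpotent Γ] : (sylowSup Γ s).Normal :=
  biSup_normal _ _ fun _ => normal_sylow_of_mem_primeFactors

theorem card_sylowSup_dvd [Group.IsNilpotent Γ] :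
    Nat.card (sylowSup Γ s) ∣ s ^ ∑ p ∈ s.primeFactors, (Nat.card Γ).factorization p := by
  refine (card_biSup_dvd_prod _ _ fun _ => normal_sylow_of_mem_primeFactors).trans ?_
  rw [← Finset.prod_pow_eq_pow_sum]
  refine Finset.prod_dvd_prod_of_dvd _ _ fun p hp => ?_
  have : Fact p.Prime := ⟨Nat.prime_of_mem_primeFactors hp⟩
  rw [Sylow.card_eq_multiplicity]
  exact pow_dvd_pow_of_dvd (Nat.dvd_of_mem_primeFactors hp) _

theorem coprime_index_sylowSup (hs : s ≠ 0) : (sylowSup Γ s).index.Coprime s :=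
  Nat.coprime_of_dvd fun p hp hpT hps => by
    have : Fact p.Prime := ⟨hp⟩
    have hle : ((default : Sylow p Γ) : Subgroup Γ) ≤ sylowSup Γ s :=
      le_biSup (fun p => ((default : Sylow p Γ) : Subgroup Γ))
        (Nat.mem_primeFactors.2 ⟨hp, hps, hs⟩)
    exact (default : Sylow p Γ).not_dvd_index (hpT.trans (index_dvd_of_le hle))

end SylowSup

section RelativeOrder

variable {G : Type*} [Group G] {H : Subgroup G} {g : G}

theorem pow_mem_of_sInf_dvd {s : ℕ} (hs : s ≠ 0)
    (h : sInf {n : ℕ | 0 < n ∧ g ^ n ∈ H} ∣ s) : g ^ s ∈ H := by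
  have hne : {n : ℕ | 0 < n ∧ g ^ n ∈ H}.Nonempty := by
    refine Nat.nonempty_of_pos_sInf (Nat.pos_of_ne_zero fun h0 => hs ?_)
    rwa [h0, zero_dvd_iff] at h
  obtain ⟨c, rfl⟩ := h
  rw [pow_mul]
  exact pow_mem (Nat.sInf_mem hne).2 c

theorem sInf_eq_one_of_mem (hg : g ∈ H) : sInf {n : ℕ | 0 < n ∧ g ^ n ∈ H} = 1 := by
  have h1 : 1 ∈ {n : ℕ | 0 < n ∧ g ^ n ∈ H} := ⟨one_pos, by rwa [pow_one]⟩
  exact le_antisymm (Nat.sInf_le h1) (Nat.sInf_mem ⟨1, h1⟩).1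

end RelativeOrder

theorem stmt_12_general {G : Type*} [Group G] [Group.IsNilpotent G]
    (H : Subgroup G) [H.FiniteIndex] (s : ℕ) (hs : 0 < s) :
    ∃ k : ℕ,
      H.relIndex (Subgroup.closure {g : G | sInf {n : ℕ | 0 < n ∧ g ^ n ∈ H} ∣ s}) ∣ s ^ k := by
  set S := {g : G | sInf {n : ℕ | 0 < n ∧ g ^ n ∈ H} ∣ s}
  set π := QuotientGroup.mk' H.normalCore
  set B := H.map π
  set T := sylowSup (G ⧸ H.normalCore) s
  have hHB : B.comap π = H := by
    rw [comap_map_eq, QuotientGroup.ker_mk', sup_eq_left.2 H.normalCore_le]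
  have hH : H ≤ closure S := fun h hh =>
    subset_closure (show _ ∣ s by rw [sInf_eq_one_of_mem hh]; exact one_dvd s)
  have hS : closure S ≤ (B ⊔ T).comap π :=
    (closure_le _).2 fun g hg => mem_sup_of_pow_mem (coprime_index_sylowSup hs.ne') <| by
      simpa only [map_pow] using mem_map_of_mem π (pow_mem_of_sInf_dvd hs.ne' hg)
  obtain ⟨k, hk⟩ : ∃ k, Nat.card T ∣ s ^ k := ⟨_, card_sylowSup_dvd⟩
  refine ⟨k, (relIndex_dvd_relIndex_of_le hH hS).trans ?_⟩
  calc H.relIndex ((B ⊔ T).comap π)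
        = (B.comap π).relIndex ((B ⊔ T).comap π) := by rw [hHB]
    _ = B.relIndex (B ⊔ T) := by
        rw [relIndex_comap, map_comap_eq_self_of_surjective (QuotientGroup.mk'_surjective _)]
    _ ∣ Nat.card T := relIndex_sup_dvd_card B T
    _ ∣ s ^ k := hk

theorem stmt_12 {G : Type*} [Group G] [Group.IsNilpotent G] [Group.FG G]
    (H : Subgroup G) [H.FiniteIndex] (s : ℕ) (hs : 0 < s) :
    ∃ k : ℕ,
      H.relIndex (Subgroup.closure {g : G | sInf {n : ℕ | 0 < n ∧ g ^ n ∈ H} ∣ s}) ∣ s ^ k :=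
  stmt_12_general H s hs
end

section
/- Let G be a nilpotent group of nilpotency class at most c, X a generating set of G, s a positive integer, and H = ⟨ x^s : x ∈ X ⟩. Then G^(s^m) ≤ H for m = c(c+1)/2, i.e., g^(s^m) ∈ H for every g ∈ G. -/
/-!
Write `γₙ` for the lower central series and `H` for the subgroup generated by the `s`-th powers
of the generators. First, `z ^ s ^ (n + 1) ∈ H ⊔ γₙ₊₁` for `z ∈ γₙ`, by induction on `n` in
`G ⧸ γₙ₊₁`. There `γₙ` is central, so `(a, u) ↦ ⁅a, u⁆` is bilinear on `γₙ₋₁ × G` and, for a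
generator `x`, `⁅a, x⁆ ^ s ^ (n + 1) = ⁅a ^ s ^ n, x ^ s⁆`. By induction `a ^ s ^ n = h z` with
`h ∈ H` and `z` central, so this is `⁅h, x ^ s⁆ ∈ H`; bilinearity spreads this to all of `γₙ`.
Finally, if `γ_{c+1} = 1`, induction on `c` applied in `G ⧸ γ_c` gives `g ^ s ^ (c(c+1)/2) = h w`
with `h ∈ H` and `w ∈ γ_c` central, and raising to the power `s ^ (c + 1)` lands in `H`.
-/

open Subgroup
open scoped commutatorElement

section Commutators

variable {G : Type*} [Group G]

theorem commutatorElement_mul_left_of_mem_center {w : G} (hw : w ∈ center G) (h x : G) :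
    ⁅h * w, x⁆ = ⁅h, x⁆ := by
  have hwx : ⁅w, x⁆ = 1 :=
    commutatorElement_eq_one_iff_mul_comm.mpr (mem_center_iff.mp hw x).symm
  rw [commutatorElement_mul_left_eq_conj_mul, hwx, mul_one, mul_inv_cancel, one_mul]

theorem commutatorElement_pow_left_of_mem_center {a y : G} (h : ⁅a, y⁆ ∈ center G) (k : ℕ) :
    ⁅a ^ k, y⁆ = ⁅a, y⁆ ^ k := by
  induction k with
  | zero => simp
  | succ k ih =>
    rw [pow_succ, commutatorElement_mul_left_eq_conj_mul, mem_center_iff.mp h, mul_inv_cancel_right,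
      ih, pow_succ']

def commutatorElementHom (a : G) (ha : ∀ u, ⁅a, u⁆ ∈ center G) : G →* G :=
  MonoidHom.mk' (fun u => ⁅a, u⁆) fun u v => by
    rw [commutatorElement_mul_right_eq_mul_conj, mul_assoc _ u, mem_center_iff.mp (ha v) u,
      ← mul_assoc, mul_inv_cancel_right]

theorem pow_mem_of_mem_closure_of_subset_center {S : Set G} (hS : S ⊆ center G) {H : Subgroup G}
    {k : ℕ} (hSH : ∀ x ∈ S, x ^ k ∈ H) {w : G} (hw : w ∈ closure S) : w ^ k ∈ H := by
  have hcomm : ∀ x ∈ closure S, ∀ y, Commute x y := fun x hx y =>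
    (mem_center_iff.mp ((closure_le _).mpr hS hx) y).symm
  induction hw using closure_induction with
  | mem x hx => exact hSH x hx
  | one => simp
  | mul x y hx _ hxk hyk => rw [(hcomm x hx y).mul_pow]; exact mul_mem hxk hyk
  | inv x _ hxk => rw [inv_pow]; exact inv_mem hxk

end Commutators

section Quotients

variable {G K : Type*} [Group G] [Group K]

theorem lowerCentralSeries_le_center_of_succ_eq_bot {n : ℕ}
    (h : (⊤ : Subgroup G).lowerCentralSeries (n + 1) = ⊥) :
    (⊤ : Subgroup G).lowerCentralSeries n ≤ center G := fun z hz =>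
  mem_center_iff.mpr fun g => by
    have hzg : ⁅z, g⁆ ∈ (⊤ : Subgroup G).lowerCentralSeries (n + 1) :=
      commutator_mem_commutator hz (mem_top g)
    rw [h, mem_bot, commutatorElement_eq_one_iff_mul_comm] at hzg
    exact hzg.symm

theorem map_top_lowerCentralSeries_of_surjective {f : G →* K} (hf : Function.Surjective f)
    (n : ℕ) :
    ((⊤ : Subgroup G).lowerCentralSeries n).map f = (⊤ : Subgroup K).lowerCentralSeries n := by
  rw [map_lowerCentralSeries, map_top_of_surjective f hf]

theorem lowerCentralSeries_quotient_lowerCentralSeries_eq_bot (n : ℕ) :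
    (⊤ : Subgroup (G ⧸ (⊤ : Subgroup G).lowerCentralSeries n)).lowerCentralSeries n = ⊥ := by
  rw [← map_top_lowerCentralSeries_of_surjective (QuotientGroup.mk'_surjective _),
    Subgroup.map_eq_bot_iff, QuotientGroup.ker_mk']

def powClosure (s : ℕ) (X : Set G) : Subgroup G :=
  closure ((fun x => x ^ s) '' X)

theorem pow_mem_powClosure {s : ℕ} {X : Set G} {x : G} (hx : x ∈ X) : x ^ s ∈ powClosure s X :=
  subset_closure ⟨x, hx, rfl⟩

theorem map_powClosure (f : G →* K) (s : ℕ) (X : Set G) :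
    (powClosure s X).map f = powClosure s (f '' X) := by
  rw [powClosure, powClosure, MonoidHom.map_closure, Set.image_image, Set.image_image]
  simp only [map_pow]

theorem closure_image_eq_top_of_surjective {f : G →* K} (hf : Function.Surjective f) {X : Set G}
    (hX : closure X = ⊤) : closure (f '' X) = ⊤ := by
  rw [← MonoidHom.map_closure, hX, map_top_of_surjective f hf]

theorem mem_powClosure_sup_of_mk_mem (N : Subgroup G) [N.Normal] {s : ℕ} {X : Set G} {g : G}
    (h : QuotientGroup.mk' N g ∈ powClosure s (QuotientGroup.mk' N '' X)) :
    g ∈ powClosure s X ⊔ N := by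
  rw [← QuotientGroup.ker_mk' N, ← comap_map_eq, mem_comap, map_powClosure]
  exact h

end Quotients

section PowerGeneration

variable {G : Type*} [Group G] {s : ℕ} {X : Set G}

theorem pow_mem_powClosure_of_lowerCentralSeries_one_eq_bot (hX : closure X = ⊤)
    (hG : (⊤ : Subgroup G).lowerCentralSeries 1 = ⊥) (g : G) : g ^ s ∈ powClosure s X :=
  pow_mem_of_mem_closure_of_subset_center
    (fun x _ => lowerCentralSeries_le_center_of_succ_eq_bot hG (mem_top x))
    (fun _ hx => pow_mem_powClosure hx) (hX ▸ mem_top g)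

theorem pow_mem_powClosure_of_lowerCentralSeries_succ_succ_eq_bot {n : ℕ} (hX : closure X = ⊤)
    (hG : (⊤ : Subgroup G).lowerCentralSeries (n + 2) = ⊥)
    (ih : ∀ a ∈ (⊤ : Subgroup G).lowerCentralSeries n,
      a ^ s ^ (n + 1) ∈ powClosure s X ⊔ (⊤ : Subgroup G).lowerCentralSeries (n + 1))
    {w : G} (hw : w ∈ (⊤ : Subgroup G).lowerCentralSeries (n + 1)) :
    w ^ s ^ (n + 2) ∈ powClosure s X := by
  have hcent := lowerCentralSeries_le_center_of_succ_eq_bot hG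
  have hcomm : ∀ a ∈ (⊤ : Subgroup G).lowerCentralSeries n, ∀ u, ⁅a, u⁆ ∈ center G :=
    fun a ha u => hcent (commutator_mem_commutator ha (mem_top u))
  have hgen : ∀ a ∈ (⊤ : Subgroup G).lowerCentralSeries n, ∀ x ∈ X,
      ⁅a, x⁆ ^ s ^ (n + 2) ∈ powClosure s X := by
    intro a ha x hx
    obtain ⟨h, hh, z, hz, hhz⟩ := mem_sup_of_normal_right.mp (ih a ha)
    have hxs : x ^ s ∈ powClosure s X := pow_mem_powClosure hx
    have hbilin : ⁅a, x⁆ ^ s ^ (n + 2) = ⁅h, x ^ s⁆ :=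
      calc ⁅a, x⁆ ^ s ^ (n + 2) = (⁅a, x⁆ ^ s) ^ s ^ (n + 1) := by rw [pow_succ' s, pow_mul]
        _ = ⁅a, x ^ s⁆ ^ s ^ (n + 1) :=
          congrArg (· ^ s ^ (n + 1)) (map_pow (commutatorElementHom a (hcomm a ha)) x s).symm
        _ = ⁅h * z, x ^ s⁆ := by
          rw [← commutatorElement_pow_left_of_mem_center (hcomm a ha _), hhz]
        _ = ⁅h, x ^ s⁆ := commutatorElement_mul_left_of_mem_center (hcent hz) h _
    rw [hbilin, commutatorElement_def]
    exact mul_mem (mul_mem (mul_mem hh hxs) (inv_mem hh)) (inv_mem hxs)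
  have hcommutators : ∀ a ∈ (⊤ : Subgroup G).lowerCentralSeries n, ∀ u,
      ⁅a, u⁆ ^ s ^ (n + 2) ∈ powClosure s X := by
    intro a ha u
    refine pow_mem_of_mem_closure_of_subset_center (S := commutatorElementHom a (hcomm a ha) '' X)
      ?_ ?_ ?_
    · rintro _ ⟨x, -, rfl⟩
      exact hcomm a ha x
    · rintro _ ⟨x, hx, rfl⟩
      exact hgen a ha x hx
    · rw [← MonoidHom.map_closure, hX]
      exact mem_map_of_mem _ (mem_top u)
  refine pow_mem_of_mem_closure_of_subset_center ?_ ?_ hw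
  · rintro _ ⟨a, ha, u, -, rfl⟩
    exact hcomm a ha u
  · rintro _ ⟨a, ha, u, -, rfl⟩
    exact hcommutators a ha u

theorem pow_mem_powClosure_sup_lowerCentralSeries (n : ℕ) (hX : closure X = ⊤) {z : G}
    (hz : z ∈ (⊤ : Subgroup G).lowerCentralSeries n) :
    z ^ s ^ (n + 1) ∈ powClosure s X ⊔ (⊤ : Subgroup G).lowerCentralSeries (n + 1) := by
  induction n generalizing G with
  | zero =>
    have hπ := QuotientGroup.mk'_surjective ((⊤ : Subgroup G).lowerCentralSeries 1)
    apply mem_powClosure_sup_of_mk_mem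
    rw [map_pow, pow_one]
    exact pow_mem_powClosure_of_lowerCentralSeries_one_eq_bot
      (closure_image_eq_top_of_surjective hπ hX)
      (lowerCentralSeries_quotient_lowerCentralSeries_eq_bot 1) _
  | succ n ih =>
    have hπ := QuotientGroup.mk'_surjective ((⊤ : Subgroup G).lowerCentralSeries (n + 2))
    have hπX := closure_image_eq_top_of_surjective hπ hX
    apply mem_powClosure_sup_of_mk_mem
    rw [map_pow]
    refine pow_mem_powClosure_of_lowerCentralSeries_succ_succ_eq_bot hπX
      (lowerCentralSeries_quotient_lowerCentralSeries_eq_bot _) (fun a ha => ih hπX ha) ?_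
    rw [← map_top_lowerCentralSeries_of_surjective hπ]
    exact mem_map_of_mem _ hz

theorem pow_mem_powClosure_of_lowerCentralSeries_eq_bot (c : ℕ) (hX : closure X = ⊤)
    (hG : (⊤ : Subgroup G).lowerCentralSeries c = ⊥) (g : G) :
    g ^ s ^ (c * (c + 1) / 2) ∈ powClosure s X := by
  induction c generalizing G with
  | zero =>
    rw [show g = 1 from (mem_bot.mp (hG ▸ mem_top g : g ∈ (⊥ : Subgroup G))), one_pow]
    exact one_mem _
  | succ c ih =>
    have hπ := QuotientGroup.mk'_surjective ((⊤ : Subgroup G).lowerCentralSeries c)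
    have hmod := ih (closure_image_eq_top_of_surjective hπ hX)
      (lowerCentralSeries_quotient_lowerCentralSeries_eq_bot c) (QuotientGroup.mk' _ g)
    rw [← map_pow] at hmod
    obtain ⟨h, hh, w, hw, hhw⟩ :=
      mem_sup_of_normal_right.mp (mem_powClosure_sup_of_mk_mem _ hmod)
    have hwX : w ^ s ^ (c + 1) ∈ powClosure s X := by
      simpa only [hG, sup_bot_eq] using pow_mem_powClosure_sup_lowerCentralSeries c hX hw
    have hcomm : Commute h w :=
      mem_center_iff.mp (lowerCentralSeries_le_center_of_succ_eq_bot hG hw) h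
    have hexp : (c + 1) * (c + 1 + 1) / 2 = c * (c + 1) / 2 + (c + 1) := by
      rw [show (c + 1) * (c + 1 + 1) = c * (c + 1) + (c + 1) * 2 by ring,
        Nat.add_mul_div_right _ _ two_pos]
    rw [hexp, pow_add, pow_mul, ← hhw, hcomm.mul_pow]
    exact mul_mem (pow_mem hh _) hwX

end PowerGeneration

theorem stmt_13_general {G : Type*} [Group G] [Group.IsNilpotent G] (c : ℕ)
    (hc : Group.nilpotencyClass G ≤ c) (X : Set G) (hX : Subgroup.closure X = ⊤)
    (s : ℕ) :
    ∀ g : G, g ^ s ^ (c * (c + 1) / 2) ∈ Subgroup.closure ((fun x : G => x ^ s) '' X) :=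
  pow_mem_powClosure_of_lowerCentralSeries_eq_bot c hX
    (Subgroup.lowerCentralSeries_eq_bot_iff_nilpotencyClass_le.mpr hc)

theorem stmt_13 {G : Type*} [Group G] [Group.IsNilpotent G] (c : ℕ)
    (hc : Group.nilpotencyClass G ≤ c) (X : Set G) (hX : Subgroup.closure X = ⊤)
    (s : ℕ) (hs : 0 < s) :
    ∀ g : G, g ^ s ^ (c * (c + 1) / 2) ∈ Subgroup.closure ((fun x : G => x ^ s) '' X) :=
  stmt_13_general c hc X hX s
end

section
/- Let φ, ψ : ℚⁿ → ℚⁿ be ℚ-linear maps with ℝ-linear extensions φ^ℝ, ψ^ℝ : ℝⁿ → ℝⁿ, and let H^ℝ = ker(φ^ℝ − ψ^ℝ). Then for all v ∈ ℝⁿ: φ^ℝ(v) − ψ^ℝ(v) ∈ ℚⁿ if and only if v ∈ ℚⁿ + H^ℝ (the set of sums q + h with q ∈ ℚⁿ, h ∈ H^ℝ). -/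
theorem stmt_17 (n : ℕ) (φ ψ : (Fin n → ℚ) →ₗ[ℚ] (Fin n → ℚ))
    (Φ Ψ : (Fin n → ℝ) →ₗ[ℝ] (Fin n → ℝ))
    (hΦ : ∀ q : Fin n → ℚ, Φ (fun i => (q i : ℝ)) = fun i => ((φ q) i : ℝ))
    (hΨ : ∀ q : Fin n → ℚ, Ψ (fun i => (q i : ℝ)) = fun i => ((ψ q) i : ℝ)) :
    ∀ v : Fin n → ℝ,
      ((∃ q : Fin n → ℚ, Φ v - Ψ v = fun i => (q i : ℝ)) ↔
        ∃ q : Fin n → ℚ, ∃ h : Fin n → ℝ, Φ h = Ψ h ∧ v = (fun i => (q i : ℝ)) + h) := by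
  intro v
  set D : (Fin n → ℝ) →ₗ[ℝ] (Fin n → ℝ) := Φ - Ψ with hDdef
  have key : ∀ q : Fin n → ℚ, D (fun i => (q i : ℝ)) = fun i => (((φ - ψ) q) i : ℝ) := by
    intro q
    funext i
    simp [hDdef, hΦ q, hΨ q]
  constructor
  · rintro ⟨r, hr⟩
    have hDv : D v = fun i => (r i : ℝ) := by simpa [hDdef] using hr
    by_cases hmem : r ∈ LinearMap.range (φ - ψ)
    · obtain ⟨q, hq⟩ := hmem
      refine ⟨q, v - fun i => (q i : ℝ), ?_, by abel⟩
      have hD0 : D (v - fun i => (q i : ℝ)) = 0 := by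
        rw [map_sub, hDv, key q, hq]
        funext i; simp
      have h2 : Φ (v - fun i => (q i : ℝ)) - Ψ (v - fun i => (q i : ℝ)) = 0 := by
        simpa [hDdef] using hD0
      rwa [sub_eq_zero] at h2
    · exfalso
      obtain ⟨f, hf0, hfbot⟩ :=
        Submodule.exists_dual_map_eq_bot_of_notMem (p := LinearMap.range (φ - ψ)) hmem inferInstance
      have hfker : ∀ x ∈ LinearMap.range (φ - ψ), f x = 0 := by
        intro x hx
        have : f x ∈ (LinearMap.range (φ - ψ)).map f := ⟨x, hx, rfl⟩
        rw [hfbot] at this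
        simpa using this
      set eQ : Fin n → Fin n → ℚ := fun i j => if i = j then 1 else 0 with heQ
      set F : (Fin n → ℝ) →ₗ[ℝ] ℝ :=
        ∑ i : Fin n, (f (eQ i) : ℝ) • (LinearMap.proj i) with hFdef
      have hFapp : ∀ x : Fin n → ℝ, F x = ∑ i, (f (eQ i) : ℝ) * x i := by
        intro x; simp [hFdef]
      have hFcast : ∀ w : Fin n → ℚ, F (fun i => (w i : ℝ)) = (f w : ℝ) := by
        intro w
        rw [hFapp]
        have hfw : f w = ∑ i, w i * f (eQ i) := by
          conv_lhs => rw [pi_eq_sum_univ w, map_sum]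
          refine Finset.sum_congr rfl fun i _ => ?_
          rw [map_smul, heQ, smul_eq_mul]
        rw [hfw]
        push_cast
        exact Finset.sum_congr rfl fun i _ => mul_comm _ _
      have hFD : ∀ x : Fin n → ℝ, F (D x) = 0 := by
        intro x
        have hx : F (D x) = ∑ i, x i * F (D (fun j => if i = j then (1:ℝ) else 0)) := by
          conv_lhs => rw [pi_eq_sum_univ x, map_sum, map_sum]
          refine Finset.sum_congr rfl fun i _ => ?_
          rw [map_smul, map_smul, smul_eq_mul]
        rw [hx]
        refine Finset.sum_eq_zero fun i _ => ?_
        have hcast : (fun j => if i = j then (1:ℝ) else 0) = fun j => ((eQ i j : ℚ) : ℝ) := by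
          funext j; simp [heQ]; split <;> simp
        rw [hcast, key, hFcast, hfker _ ⟨eQ i, rfl⟩]
        simp
      have h1 : F (D v) = (f r : ℝ) := by rw [hDv, hFcast]
      rw [hFD v] at h1
      exact hf0 (by exact_mod_cast h1.symm)
  · rintro ⟨q, h, hh, rfl⟩
    refine ⟨φ q - ψ q, ?_⟩
    rw [map_add, map_add, hΦ q, hΨ q]
    funext i
    have := congrFun hh i
    simp only [Pi.add_apply, Pi.sub_apply]
    push_cast
    linarith
end
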